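/- arXiv:1410.2591 — 2 statements merged into one kernel-verified Lean document; each statement's English description precedes it below -/
import Mathlib

section
/- The number of bridges of length m+n starting at a fixed vertex is supermultiplicative: b_{m+n} ≥ b_m · b_n, where b_n denotes the number of n-step bridges. -/
/-!
Because `s₁` is independent, `Γ` is the free product of `⟨s₁⟩ ≅ ℤ` with the subgroup generated
by the other generators; killing the second factor gives a homomorphism `Γ → ℤ` whose increment
along every edge is the edge's weight, so the height of a walk from `1` after `s` steps is the
height of the vertex `ω s`. Hence, after time `m`, the concatenation of an `m`-bridge `ω` with the
translate by `ω m` of an `n`-bridge lies strictly above every vertex of `ω`: it is self-avoiding,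
and a bridge. Concatenation is injective on pairs, and bridges of a given length are finite in
number because `S` is finite.
-/

open Filter
open scoped Classical

variable {Γ : Type*} [Group Γ]

/-- The Cayley graph of a group with (not necessarily symmetric) generating set `S`. -/
def cayley (S : Set Γ) : SimpleGraph Γ where
  Adj x y := x ≠ y ∧ (x⁻¹ * y ∈ S ∨ y⁻¹ * x ∈ S)
  symm := ⟨fun x y h => ⟨h.1.symm, h.2.symm⟩⟩
  loopless := ⟨fun x h => h.1 rfl⟩

/-- The antisymmetric edge weight attached to the distinguished generator `s₁`. -/
noncomputable def wt (s₁ : Γ) (x y : Γ) : ℤ :=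
  if x⁻¹ * y = s₁ then 1 else if x⁻¹ * y = s₁⁻¹ then -1 else 0

/-- An `n`-step walk from the identity in the Cayley graph, frozen after time `n`. -/
def IsWalkFrom (S : Set Γ) (n : ℕ) (ω : ℕ → Γ) : Prop :=
  ω 0 = 1 ∧ (∀ i < n, (cayley S).Adj (ω i) (ω (i+1))) ∧ ∀ i, n ≤ i → ω i = ω n

/-- An `n`-step self-avoiding walk from the identity. -/
def IsSAWFrom (S : Set Γ) (n : ℕ) (ω : ℕ → Γ) : Prop :=
  IsWalkFrom S n ω ∧ ∀ i ≤ n, ∀ j ≤ n, ω i = ω j → i = j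

/-- The number of `n`-step self-avoiding walks from a fixed vertex. -/
noncomputable def sawCount (S : Set Γ) (n : ℕ) : ℕ :=
  Nat.card {ω : ℕ → Γ // IsSAWFrom S n ω}

/-- The height of step `s` of a walk, via the `±1` weight on `s₁`-edges. -/
noncomputable def height (s₁ : Γ) (ω : ℕ → Γ) (s : ℕ) : ℤ :=
  ∑ i ∈ Finset.range s, wt s₁ (ω i) (ω (i+1))

/-- An `n`-step bridge: `h_0 < h_s ≤ h_n` for `1 ≤ s ≤ n`. -/
noncomputable def IsBridge (S : Set Γ) (s₁ : Γ) (n : ℕ) (ω : ℕ → Γ) : Prop :=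
  IsSAWFrom S n ω ∧ ∀ s, 1 ≤ s → s ≤ n →
    0 < height s₁ ω s ∧ height s₁ ω s ≤ height s₁ ω n

/-- The number of `n`-step bridges from a fixed vertex. -/
noncomputable def bridgeCount (S : Set Γ) (s₁ : Γ) (n : ℕ) : ℕ :=
  Nat.card {ω : ℕ → Γ // IsBridge S s₁ n ω}

/-- An `n`-step half-space walk: `h_0 < h_s` for `1 ≤ s ≤ n`. -/
def IsHalfSpace (S : Set Γ) (s₁ : Γ) (n : ℕ) (ω : ℕ → Γ) : Prop :=
  IsSAWFrom S n ω ∧ ∀ s, 1 ≤ s → s ≤ n → 0 < height s₁ ω s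

/-- The number of `n`-step half-space walks from a fixed vertex. -/
noncomputable def hswCount (S : Set Γ) (s₁ : Γ) (n : ℕ) : ℕ :=
  Nat.card {ω : ℕ → Γ // IsHalfSpace S s₁ n ω}

/-- The span of an `n`-step walk: `max_s h_s - min_s h_s`. -/
noncomputable def wspan (s₁ : Γ) (n : ℕ) (ω : ℕ → Γ) : ℤ :=
  ((Finset.range (n+1)).sup' Finset.nonempty_range_add_one (height s₁ ω)) -
    ((Finset.range (n+1)).inf' Finset.nonempty_range_add_one (height s₁ ω))

/-- The number of `n`-step bridges of span `A` from a fixed vertex. -/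
noncomputable def bridgeSpanCount (S : Set Γ) (s₁ : Γ) (n A : ℕ) : ℕ :=
  Nat.card {ω : ℕ → Γ // IsBridge S s₁ n ω ∧ wspan s₁ n ω = A}

/-- `s₁` is a generator of infinite order, independent (free) from the remaining
generators: the group is the free product of `⟨s₁⟩` and the subgroup generated
by the other generators. -/
def IsIndepGen (S : Set Γ) (s₁ : Γ) : Prop :=
  s₁ ∈ S ∧ ¬ IsOfFinOrder s₁ ∧
  Function.Bijective
    (Monoid.Coprod.lift (Subgroup.closure (S \ {s₁, s₁⁻¹})).subtype
      (Subgroup.zpowers s₁).subtype)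

/-- The connective constant of the Cayley graph of `(Γ, S)`, as `inf_n c_n^(1/n)`. -/
noncomputable def connConst (S : Set Γ) : ℝ :=
  ⨅ n : {n : ℕ // 0 < n}, (sawCount S n.1 : ℝ) ^ (1 / (n.1 : ℝ))

/-- The number of partitions of `n` into distinct parts. -/
def PD (n : ℕ) : ℕ := (Nat.Partition.distincts n).card

noncomputable def zpowersEquivOfNotIsOfFinOrder {g : Γ} (hg : ¬IsOfFinOrder g) :
    Multiplicative ℤ ≃* Subgroup.zpowers g :=
  MonoidHom.ofInjective (f := zpowersHom Γ g)
    ((injective_zpow_iff_not_isOfFinOrder.mpr hg).comp Multiplicative.toAdd.injective :)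

namespace IsIndepGen

variable {S : Set Γ} {s₁ : Γ}

noncomputable def heightHom (hind : IsIndepGen S s₁) : Γ →* Multiplicative ℤ :=
  (Monoid.Coprod.lift 1 (zpowersEquivOfNotIsOfFinOrder hind.2.1).symm.toMonoidHom).comp
    (MulEquiv.ofBijective _ hind.2.2).symm.toMonoidHom

lemma heightHom_self (hind : IsIndepGen S s₁) : hind.heightHom s₁ = .ofAdd 1 := by
  have : (MulEquiv.ofBijective _ hind.2.2).symm s₁ =
      Monoid.Coprod.inr ⟨s₁, Subgroup.mem_zpowers s₁⟩ := by
    rw [MulEquiv.symm_apply_eq]; rfl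
  simp only [heightHom, MonoidHom.comp_apply, MulEquiv.coe_toMonoidHom, this,
    Monoid.Coprod.lift_apply_inr, MulEquiv.symm_apply_eq]
  ext
  exact (zpow_one s₁).symm

lemma heightHom_eq_one (hind : IsIndepGen S s₁) {g : Γ}
    (hg : g ∈ Subgroup.closure (S \ {s₁, s₁⁻¹})) : hind.heightHom g = 1 := by
  have : (MulEquiv.ofBijective _ hind.2.2).symm g = Monoid.Coprod.inl ⟨g, hg⟩ := by
    rw [MulEquiv.symm_apply_eq]; rfl
  simp [heightHom, this]

lemma toAdd_heightHom_of_mem (hind : IsIndepGen S s₁) {g : Γ} (hg : g ∈ S ∨ g⁻¹ ∈ S) :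
    (hind.heightHom g).toAdd = if g = s₁ then 1 else if g = s₁⁻¹ then -1 else 0 := by
  split_ifs with h₁ h₂
  · simp [h₁, hind.heightHom_self]
  · simp [h₂, hind.heightHom_self]
  · have hmem : g ∈ Subgroup.closure (S \ {s₁, s₁⁻¹}) := by
      rcases hg with hg | hg
      · exact Subgroup.subset_closure ⟨hg, by simp [h₁, h₂]⟩
      · refine inv_mem_iff.mp (Subgroup.subset_closure ⟨hg, ?_⟩)
        simp [inv_eq_iff_eq_inv, h₁, h₂]
    simp [hind.heightHom_eq_one hmem]

lemma wt_eq_of_adj (hind : IsIndepGen S s₁) {x y : Γ} (h : (cayley S).Adj x y) :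
    wt s₁ x y = (hind.heightHom y).toAdd - (hind.heightHom x).toAdd := by
  have hg : x⁻¹ * y ∈ S ∨ (x⁻¹ * y)⁻¹ ∈ S := by simpa using h.2
  rw [wt, ← hind.toAdd_heightHom_of_mem hg]
  simp [sub_eq_neg_add]

lemma height_eq_of_isWalkFrom (hind : IsIndepGen S s₁) {n : ℕ} {ω : ℕ → Γ}
    (hω : IsWalkFrom S n ω) {s : ℕ} (hs : s ≤ n) :
    height s₁ ω s = (hind.heightHom (ω s)).toAdd := by
  induction s with
  | zero => simp [height, hω.1]
  | succ s ih =>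
    rw [height, Finset.sum_range_succ, ← height, ih (by omega),
      hind.wt_eq_of_adj (hω.2.1 s hs)]
    ring

end IsIndepGen

section Walks

variable {S : Set Γ} {m n : ℕ} {ω ω' : ℕ → Γ}

lemma mem_union_inv_of_cayley_adj {x y : Γ} (h : (cayley S).Adj x y) : x⁻¹ * y ∈ S ∪ S⁻¹ := by
  simpa using h.2

lemma cayley_adj_mul_left (g : Γ) {x y : Γ} (h : (cayley S).Adj x y) :
    (cayley S).Adj (g * x) (g * y) := by
  simpa [cayley, mul_assoc] using h

lemma IsWalkFrom.eq_of_forall_le {ω₁ ω₂ : ℕ → Γ} (h₁ : IsWalkFrom S n ω₁)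
    (h₂ : IsWalkFrom S n ω₂) (h : ∀ i ≤ n, ω₁ i = ω₂ i) : ω₁ = ω₂ := by
  funext i
  rcases le_or_gt i n with hi | hi
  · exact h i hi
  · rw [h₁.2.2 i hi.le, h₂.2.2 i hi.le, h n le_rfl]

lemma finite_setOf_isWalkFrom (hS : S.Finite) (n : ℕ) : {ω : ℕ → Γ | IsWalkFrom S n ω}.Finite := by
  let steps (ω : ℕ → Γ) (i : Fin n) : Γ := (ω i)⁻¹ * ω (i + 1)
  refine Set.Finite.of_injOn (f := steps) (t := {σ | ∀ i, σ i ∈ S ∪ S⁻¹}) ?_ ?_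
    (Set.Finite.pi' fun _ => hS.union hS.inv)
  · exact fun ω hω i => mem_union_inv_of_cayley_adj (hω.2.1 i i.2)
  · intro ω₁ h₁ ω₂ h₂ h
    refine h₁.eq_of_forall_le h₂ fun i hi => ?_
    induction i with
    | zero => rw [h₁.1, h₂.1]
    | succ i ih =>
      have hstep := congrFun h ⟨i, hi⟩
      simp only [steps, ih (by omega)] at hstep
      exact mul_left_cancel hstep

def walkConcat (m : ℕ) (ω ω' : ℕ → Γ) (i : ℕ) : Γ :=
  if i ≤ m then ω i else ω m * ω' (i - m)

lemma walkConcat_of_le {i : ℕ} (hi : i ≤ m) : walkConcat m ω ω' i = ω i := if_pos hi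

lemma walkConcat_add (h₀ : ω' 0 = 1) (k : ℕ) : walkConcat m ω ω' (m + k) = ω m * ω' k := by
  rcases k.eq_zero_or_pos with rfl | hk
  · simp [walkConcat, h₀]
  · simp [walkConcat, hk.ne']

lemma IsWalkFrom.walkConcat (hω : IsWalkFrom S m ω) (hω' : IsWalkFrom S n ω') :
    IsWalkFrom S (m + n) (walkConcat m ω ω') := by
  refine ⟨by rw [walkConcat_of_le m.zero_le, hω.1], fun i hi => ?_, fun i hi => ?_⟩
  · rcases lt_or_ge i m with him | him
    · rw [walkConcat_of_le him.le, walkConcat_of_le him]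
      exact hω.2.1 i him
    · obtain ⟨k, rfl⟩ := Nat.exists_eq_add_of_le him
      rw [walkConcat_add hω'.1, add_assoc, walkConcat_add hω'.1]
      exact cayley_adj_mul_left _ (hω'.2.1 k (by omega))
  · obtain ⟨k, rfl⟩ := Nat.exists_eq_add_of_le (le_of_add_le_left hi)
    rw [walkConcat_add hω'.1, walkConcat_add hω'.1, hω'.2.2 k (by omega)]

lemma walkConcat_injective {ω₁ ω₂ ω₁' ω₂' : ℕ → Γ} (h₁ : IsWalkFrom S m ω₁)
    (h₂ : IsWalkFrom S m ω₂) (h₁' : IsWalkFrom S n ω₁') (h₂' : IsWalkFrom S n ω₂')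
    (h : walkConcat m ω₁ ω₁' = walkConcat m ω₂ ω₂') : ω₁ = ω₂ ∧ ω₁' = ω₂' := by
  have hfst : ω₁ = ω₂ := h₁.eq_of_forall_le h₂ fun i hi => by
    simpa only [walkConcat_of_le hi] using congrFun h i
  refine ⟨hfst, h₁'.eq_of_forall_le h₂' fun k _ => ?_⟩
  have hk := congrFun h (m + k)
  rwa [walkConcat_add h₁'.1, walkConcat_add h₂'.1, hfst, mul_right_inj] at hk

lemma IsSAWFrom.walkConcat (hω : IsSAWFrom S m ω) (hω' : IsSAWFrom S n ω')
    (hsep : ∀ i ≤ m, ∀ k, 1 ≤ k → k ≤ n → ω i ≠ ω m * ω' k) :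
    IsSAWFrom S (m + n) (walkConcat m ω ω') := by
  refine ⟨hω.1.walkConcat hω'.1, ?_⟩
  have h_of_le : ∀ i j, i ≤ j → j ≤ m + n →
      _root_.walkConcat m ω ω' i = _root_.walkConcat m ω ω' j → i = j := by
    intro i j hij hj heq
    rcases le_or_gt j m with hjm | hmj
    · rw [walkConcat_of_le (hij.trans hjm), walkConcat_of_le hjm] at heq
      exact hω.2 i (by omega) j hjm heq
    obtain ⟨l, rfl⟩ := Nat.exists_eq_add_of_le hmj.le
    rw [walkConcat_add hω'.1.1] at heq
    rcases le_or_gt i m with him | hmi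
    · rw [walkConcat_of_le him] at heq
      exact absurd heq (hsep i him l (by omega) (by omega))
    obtain ⟨k, rfl⟩ := Nat.exists_eq_add_of_le hmi.le
    rw [walkConcat_add hω'.1.1, mul_right_inj] at heq
    have := hω'.2 k (by omega) l (by omega) heq
    omega
  intro i hi j hj heq
  rcases le_total i j with h | h
  · exact h_of_le i j h hj heq
  · exact (h_of_le j i h hi heq.symm).symm

end Walks

section Bridges

variable {S : Set Γ} {s₁ : Γ} {n : ℕ} {ω : ℕ → Γ}

lemma IsBridge.height_nonneg (hω : IsBridge S s₁ n ω) {s : ℕ} (hs : s ≤ n) :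
    0 ≤ height s₁ ω s := by
  rcases s.eq_zero_or_pos with rfl | hpos
  · simp [height]
  · exact (hω.2 s hpos hs).1.le

lemma IsBridge.height_le (hω : IsBridge S s₁ n ω) {s : ℕ} (hs : s ≤ n) :
    height s₁ ω s ≤ height s₁ ω n := by
  rcases s.eq_zero_or_pos with rfl | hpos
  · simpa [height] using hω.height_nonneg le_rfl
  · exact (hω.2 s hpos hs).2

lemma IsIndepGen.isBridge_walkConcat (hind : IsIndepGen S s₁) {m : ℕ} {ω' : ℕ → Γ}
    (hω : IsBridge S s₁ m ω) (hω' : IsBridge S s₁ n ω') :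
    IsBridge S s₁ (m + n) (walkConcat m ω ω') := by
  have hχ := hω.1.1.walkConcat hω'.1.1
  have h_le {s : ℕ} (hs : s ≤ m) : height s₁ (walkConcat m ω ω') s = height s₁ ω s := by
    rw [hind.height_eq_of_isWalkFrom hχ (by omega), walkConcat_of_le hs,
      hind.height_eq_of_isWalkFrom hω.1.1 hs]
  have h_add {k : ℕ} (hk : k ≤ n) :
      height s₁ (walkConcat m ω ω') (m + k) = height s₁ ω m + height s₁ ω' k := by
    rw [hind.height_eq_of_isWalkFrom hχ (by omega), walkConcat_add hω'.1.1.1, map_mul, toAdd_mul,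
      hind.height_eq_of_isWalkFrom hω.1.1 le_rfl, hind.height_eq_of_isWalkFrom hω'.1.1 hk]
  refine ⟨hω.1.walkConcat hω'.1 fun i hi k hk hkn heq => ?_, fun s hs hsn => ?_⟩
  · have := congrArg (fun g => (hind.heightHom g).toAdd) heq
    simp only [map_mul, toAdd_mul, ← hind.height_eq_of_isWalkFrom hω.1.1 hi,
      ← hind.height_eq_of_isWalkFrom hω.1.1 le_rfl,
      ← hind.height_eq_of_isWalkFrom hω'.1.1 hkn] at this
    linarith [hω.height_le hi, (hω'.2 k hk hkn).1]
  · rw [h_add le_rfl]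
    rcases le_or_gt s m with hsm | hms
    · rw [h_le hsm]
      exact ⟨(hω.2 s hs hsm).1, by linarith [hω.height_le hsm, hω'.height_nonneg le_rfl]⟩
    · obtain ⟨k, rfl⟩ := Nat.exists_eq_add_of_le hms.le
      rw [h_add (by omega)]
      exact ⟨by linarith [hω.height_nonneg le_rfl, (hω'.2 k (by omega) (by omega)).1],
        by linarith [hω'.height_le (s := k) (by omega)]⟩

end Bridges

theorem bridge_count_supermultiplicative_general {Γ : Type*} [Group Γ]
    (S : Set Γ) (hSfin : S.Finite)
    (s₁ : Γ) (hind : IsIndepGen S s₁) (m n : ℕ) :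
    bridgeCount S s₁ m * bridgeCount S s₁ n ≤ bridgeCount S s₁ (m + n) := by
  have : Finite {ω : ℕ → Γ // IsBridge S s₁ (m + n) ω} :=
    ((finite_setOf_isWalkFrom hSfin (m + n)).subset fun _ hω => hω.1.1).to_subtype
  let concat (p : {ω // IsBridge S s₁ m ω} × {ω // IsBridge S s₁ n ω}) :
      {ω // IsBridge S s₁ (m + n) ω} :=
    ⟨walkConcat m p.1 p.2, hind.isBridge_walkConcat p.1.2 p.2.2⟩
  have hconcat : concat.Injective := fun p q h => by
    obtain ⟨h₁, h₂⟩ := walkConcat_injective p.1.2.1.1 q.1.2.1.1 p.2.2.1.1 q.2.2.1.1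
      (congrArg Subtype.val h)
    exact Prod.ext (Subtype.ext h₁) (Subtype.ext h₂)
  rw [bridgeCount, bridgeCount, ← Nat.card_prod]
  exact Nat.card_le_card_of_injective concat hconcat

/-- In a Cayley graph of an infinite group whose finite generating set
contains an infinite-order generator `s₁` independent of the other generators,
bridge counts are supermultiplicative: `b (m+n) ≥ b m * b n`. -/
theorem bridge_count_supermultiplicative {Γ : Type*} [Group Γ] [Infinite Γ]
    (S : Set Γ) (hSfin : S.Finite) (hgen : Subgroup.closure S = ⊤)
    (s₁ : Γ) (hind : IsIndepGen S s₁) (m n : ℕ) :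
    bridgeCount S s₁ m * bridgeCount S s₁ n ≤ bridgeCount S s₁ (m + n) :=
  bridge_count_supermultiplicative_general S hSfin s₁ hind m n
end

section
/- For a quotient Cayley graph H_m of H (same generating set, more relators), every SAW in H of length less than the relative girth of H_m with respect to H projects to a SAW in H_m, and conversely; hence c_n(H_m) = c_n(H) and b_n(H_m) = b_n(H) for all n < g̃_m − 1 in particular b_{g̃_m − 1}^{(m)} = b_{g̃_m − 1}. -/
open Filter
open scoped Classical

variable {Γ : Type*} [Group Γ]

/-- The relative girth of the quotient Cayley graph (via `π`) with respect to the
Cayley graph of `(Γ, S)`: the minimal length of a word over `S ∪ S⁻¹` which is a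
cycle in the quotient (trivial under `π`) but not in `Γ` (nontrivial in `Γ`);
`⊤` if there is none. -/
noncomputable def relGirth {Γ Γ' : Type*} [Group Γ] [Group Γ']
    (π : Γ →* Γ') (S : Set Γ) : ℕ∞ :=
  sInf {m : ℕ∞ | ∃ (k : ℕ) (f : Fin k → Γ), m = (k : ℕ∞) ∧
    (∀ i, f i ∈ S ∪ S⁻¹) ∧ (List.ofFn f).prod ≠ 1 ∧ π (List.ofFn f).prod = 1}

/-!
The `n` steps of a walk in the Cayley graph of `Γ` spell a word over `S ∪ S⁻¹`. If `n < g̃`, a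
subword that becomes trivial in `Γ'` closes a cycle of length `< g̃` in the quotient, so it is
already trivial in `Γ`: projection is injective on the vertices of the walk, and SAWs project to
SAWs. Conversely every walk in the quotient lifts step by step; when moreover `2 < g̃`, the map
`π` is injective on `S ∪ S⁻¹`, so the lift is unique and has the same `s₁`-heights. Hence
projection is a bijection both on SAWs and on bridges.
-/

section QuotientCayley

variable {Γ' : Type*} [Group Γ'] {S : Set Γ} {π : Γ →* Γ'}

theorem cayley_adj_iff {x y : Γ} : (cayley S).Adj x y ↔ x ≠ y ∧ x⁻¹ * y ∈ S ∪ S⁻¹ := by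
  simp only [cayley, Set.mem_union, Set.mem_inv, mul_inv_rev, inv_inv]

theorem image_union_inv (π : Γ →* Γ') (S : Set Γ) :
    π '' S ∪ (π '' S)⁻¹ = π '' (S ∪ S⁻¹) := by
  rw [Set.image_union, Set.image_inv]

theorem prod_eq_one_of_lt_relGirth {k : ℕ} (hk : (k : ℕ∞) < relGirth π S) {f : Fin k → Γ}
    (hf : ∀ i, f i ∈ S ∪ S⁻¹) (h : π (List.ofFn f).prod = 1) : (List.ofFn f).prod = 1 := by
  by_contra hne
  exact (sInf_le ⟨k, f, rfl, hf, hne, h⟩ : relGirth π S ≤ k).not_gt hk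

theorem injOn_of_two_lt_relGirth (h2 : (2 : ℕ∞) < relGirth π S) : Set.InjOn π (S ∪ S⁻¹) := by
  intro a ha b hb hab
  have hword : ∀ i, ![a⁻¹, b] i ∈ S ∪ S⁻¹ := by
    intro i
    fin_cases i
    · simpa [or_comm] using ha
    · exact hb
  have := prod_eq_one_of_lt_relGirth h2 hword (by simp [hab])
  simpa [inv_mul_eq_one] using this

theorem two_lt_relGirth_of_lt {n i : ℕ} (hn : (n : ℕ∞) + 1 < relGirth π S) (hi : i < n) :
    (2 : ℕ∞) < relGirth π S :=
  lt_of_le_of_lt (by exact_mod_cast (show 2 ≤ n + 1 by omega)) hn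

theorem prod_ofFn_inv_mul_succ (ω : ℕ → Γ) (i : ℕ) : ∀ k : ℕ,
    (List.ofFn fun t : Fin k => (ω (i + t))⁻¹ * ω (i + t + 1)).prod = (ω i)⁻¹ * ω (i + k)
  | 0 => by simp
  | k + 1 => by
    rw [List.ofFn_succ', List.concat_eq_append, List.prod_append]
    simp only [Fin.val_castSucc, Fin.val_last, List.prod_singleton]
    rw [prod_ofFn_inv_mul_succ ω i k, mul_assoc, mul_inv_cancel_left, Nat.add_assoc]

theorem eq_of_map_eq_of_lt_relGirth {n : ℕ} (hn : (n : ℕ∞) < relGirth π S) {ω : ℕ → Γ}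
    (hstep : ∀ t < n, (ω t)⁻¹ * ω (t + 1) ∈ S ∪ S⁻¹) {i j : ℕ} (hij : i ≤ j) (hj : j ≤ n)
    (h : π (ω i) = π (ω j)) : ω i = ω j := by
  obtain ⟨k, rfl⟩ := Nat.exists_eq_add_of_le hij
  have hk : (k : ℕ∞) < relGirth π S := lt_of_le_of_lt (by exact_mod_cast (by omega)) hn
  have hword := prod_eq_one_of_lt_relGirth hk (fun t => hstep (i + t) (by omega))
    (by rw [prod_ofFn_inv_mul_succ, map_mul, map_inv, h, inv_mul_cancel])
  rwa [prod_ofFn_inv_mul_succ, inv_mul_eq_one] at hword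

theorem IsSAWFrom.comp_of_lt_relGirth {n : ℕ} (hn : (n : ℕ∞) < relGirth π S) {ω : ℕ → Γ}
    (h : IsSAWFrom S n ω) : IsSAWFrom (π '' S) n (π ∘ ω) := by
  obtain ⟨⟨h0, hadj, hfrozen⟩, hinj⟩ := h
  have hstep t (ht : t < n) := (cayley_adj_iff.1 (hadj t ht)).2
  have hproj {i j} (hi : i ≤ n) (hj : j ≤ n) (h : π (ω i) = π (ω j)) : i = j := by
    rcases le_total i j with hij | hji
    · exact hinj i hi j hj (eq_of_map_eq_of_lt_relGirth hn hstep hij hj h)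
    · exact (hinj j hj i hi (eq_of_map_eq_of_lt_relGirth hn hstep hji hi h.symm)).symm
  refine ⟨⟨by simp [h0], fun t ht => cayley_adj_iff.2 ⟨?_, ?_⟩,
    fun t ht => by simp [hfrozen t ht]⟩, fun i hi j hj => hproj hi hj⟩
  · exact fun h => absurd (hproj ht.le ht h) t.succ_ne_self.symm
  · rw [Function.comp_apply, Function.comp_apply, image_union_inv, ← map_inv, ← map_mul]
    exact Set.mem_image_of_mem π (hstep t ht)

def stepWalk (n : ℕ) (g : ℕ → Γ) : ℕ → Γ
  | 0 => 1
  | k + 1 => if k < n then stepWalk n g k * g k else stepWalk n g k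

theorem stepWalk_of_le {n : ℕ} (g : ℕ → Γ) {k : ℕ} (hk : n ≤ k) :
    stepWalk n g k = stepWalk n g n := by
  induction k, hk using Nat.le_induction with
  | base => rfl
  | succ k hk ih => simp [stepWalk, Nat.not_lt.2 hk, ih]

theorem exists_isSAWFrom_comp_eq {n : ℕ} {ω' : ℕ → Γ'} (h : IsSAWFrom (π '' S) n ω') :
    ∃ ω, IsSAWFrom S n ω ∧ π ∘ ω = ω' := by
  obtain ⟨⟨h0, hadj, hfrozen⟩, hinj⟩ := h
  have hlift : ∀ i, ∃ g, i < n → g ∈ S ∪ S⁻¹ ∧ π g = (ω' i)⁻¹ * ω' (i + 1) := by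
    intro i
    by_cases hi : i < n
    · obtain ⟨g, hg⟩ := image_union_inv π S ▸ (cayley_adj_iff.1 (hadj i hi)).2
      exact ⟨g, fun _ => hg⟩
    · exact ⟨1, fun h => absurd h hi⟩
  choose g hg using hlift
  have hsucc {i} (hi : i < n) : stepWalk n g (i + 1) = stepWalk n g i * g i := if_pos hi
  have hcomp : π ∘ stepWalk n g = ω' := by
    funext i
    induction i with
    | zero => simp [stepWalk, h0]
    | succ i ih =>
      simp only [Function.comp_apply] at ih ⊢
      by_cases hi : i < n
      · rw [hsucc hi, map_mul, ih, (hg i hi).2, mul_inv_cancel_left]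
      · rw [stepWalk, if_neg hi, ih, hfrozen i (by omega), hfrozen (i + 1) (by omega)]
  refine ⟨stepWalk n g, ⟨⟨rfl, fun i hi => cayley_adj_iff.2 ⟨?_, ?_⟩, fun _ => stepWalk_of_le g⟩,
    fun i hi j hj h => hinj i hi j hj (by rw [← hcomp]; simp [h])⟩, hcomp⟩
  · exact fun h => (hadj i hi).ne (by rw [← hcomp]; simp [h])
  · rw [hsucc hi, inv_mul_cancel_left]
    exact (hg i hi).1

theorem IsWalkFrom.eq_of_comp_eq {n : ℕ} (hn : (n : ℕ∞) + 1 < relGirth π S) {ω₁ ω₂ : ℕ → Γ}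
    (h₁ : IsWalkFrom S n ω₁) (h₂ : IsWalkFrom S n ω₂) (h : π ∘ ω₁ = π ∘ ω₂) : ω₁ = ω₂ := by
  obtain ⟨h₁0, hadj₁, hfrozen₁⟩ := h₁
  obtain ⟨h₂0, hadj₂, hfrozen₂⟩ := h₂
  have hle : ∀ i ≤ n, ω₁ i = ω₂ i := by
    intro i
    induction i with
    | zero => simp [h₁0, h₂0]
    | succ i ih =>
      intro hi
      have hπ k : π (ω₁ k) = π (ω₂ k) := congrFun h k
      have hstep := injOn_of_two_lt_relGirth (two_lt_relGirth_of_lt hn hi)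
        (cayley_adj_iff.1 (hadj₁ i hi)).2 (cayley_adj_iff.1 (hadj₂ i hi)).2
        (by simp only [map_mul, map_inv, hπ])
      rw [ih (by omega), mul_right_inj] at hstep
      exact hstep
  funext i
  rcases le_total i n with hi | hi
  · exact hle i hi
  · rw [hfrozen₁ i hi, hfrozen₂ i hi, hle n le_rfl]

theorem bijOn_comp_isSAWFrom {n : ℕ} (hn : (n : ℕ∞) + 1 < relGirth π S) :
    Set.BijOn (π ∘ ·) {ω | IsSAWFrom S n ω} {ω' | IsSAWFrom (π '' S) n ω'} :=
  ⟨fun _ h => h.comp_of_lt_relGirth (lt_of_le_of_lt le_self_add hn),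
    fun _ h₁ _ h₂ h => h₁.1.eq_of_comp_eq hn h₂.1 h,
    fun _ h => exists_isSAWFrom_comp_eq h⟩

theorem wt_map (h2 : (2 : ℕ∞) < relGirth π S) {s₁ x y : Γ} (hs₁ : s₁ ∈ S)
    (hxy : x⁻¹ * y ∈ S ∪ S⁻¹) : wt (π s₁) (π x) (π y) = wt s₁ x y := by
  have hinj := injOn_of_two_lt_relGirth h2
  have hs₁' : s₁⁻¹ ∈ S ∪ S⁻¹ := Or.inr (by simpa using hs₁)
  simp only [wt, ← map_inv, ← map_mul, hinj.eq_iff hxy (Or.inl hs₁), hinj.eq_iff hxy hs₁']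

theorem height_comp {n : ℕ} (hn : (n : ℕ∞) + 1 < relGirth π S) {s₁ : Γ} (hs₁ : s₁ ∈ S)
    {ω : ℕ → Γ} (h : IsWalkFrom S n ω) {s : ℕ} (hs : s ≤ n) :
    height (π s₁) (π ∘ ω) s = height s₁ ω s := by
  refine Finset.sum_congr rfl fun i hi => ?_
  have hi : i < n := by simp at hi; omega
  exact wt_map (two_lt_relGirth_of_lt hn hi) hs₁ (cayley_adj_iff.1 (h.2.1 i hi)).2

theorem isBridge_comp_iff {n : ℕ} (hn : (n : ℕ∞) + 1 < relGirth π S) {s₁ : Γ} (hs₁ : s₁ ∈ S)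
    {ω : ℕ → Γ} (h : IsSAWFrom S n ω) :
    IsBridge (π '' S) (π s₁) n (π ∘ ω) ↔ IsBridge S s₁ n ω := by
  have hsaw := h.comp_of_lt_relGirth (lt_of_le_of_lt le_self_add hn)
  simp +contextual only [IsBridge, h, hsaw, true_and, height_comp hn hs₁ h.1, le_rfl]

theorem bijOn_comp_isBridge {n : ℕ} (hn : (n : ℕ∞) + 1 < relGirth π S) {s₁ : Γ} (hs₁ : s₁ ∈ S) :
    Set.BijOn (π ∘ ·) {ω | IsBridge S s₁ n ω} {ω' | IsBridge (π '' S) (π s₁) n ω'} := by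
  have hsub : {ω | IsSAWFrom S n ω} ∩ (π ∘ ·) ⁻¹' {ω' | IsBridge (π '' S) (π s₁) n ω'} =
      {ω | IsBridge S s₁ n ω} := by
    ext ω
    exact ⟨fun h => (isBridge_comp_iff hn hs₁ h.1).1 h.2,
      fun h => ⟨h.1, (isBridge_comp_iff hn hs₁ h.1).2 h⟩⟩
  exact hsub ▸ (bijOn_comp_isSAWFrom hn).subset_right fun _ h => h.1

end QuotientCayley

theorem quotient_saw_counts_eq_general {Γ Γ' : Type*} [Group Γ] [Group Γ']
    (S : Set Γ) (π : Γ →* Γ') (s₁ : Γ) (hs₁ : s₁ ∈ S) (n : ℕ) :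
    ((n : ℕ∞) < relGirth π S →
      ∀ ω : ℕ → Γ, IsSAWFrom S n ω → IsSAWFrom (π '' S) n (π ∘ ω)) ∧
    ((n : ℕ∞) + 1 < relGirth π S →
      sawCount (π '' S) n = sawCount S n ∧
      bridgeCount (π '' S) (π s₁) n = bridgeCount S s₁ n) := by
  refine ⟨fun hn ω h => h.comp_of_lt_relGirth hn, fun hn => ⟨?_, ?_⟩⟩
  · exact (Nat.card_congr (bijOn_comp_isSAWFrom hn).equiv).symm
  · exact (Nat.card_congr (bijOn_comp_isBridge hn hs₁).equiv).symm

/-- for a quotient Cayley graph (same generating set, more relators),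
every SAW of length `< g̃` projects to a SAW in the quotient, and for
`n < g̃ - 1` the SAW counts and bridge counts of the quotient agree with those of
the original graph (in particular `b^{(m)}_{g̃-1} = b_{g̃-1}`). -/
theorem quotient_saw_counts_eq {Γ Γ' : Type*} [Group Γ] [Group Γ']
    [Infinite Γ] [Infinite Γ'] (S : Set Γ) (hSfin : S.Finite)
    (hgen : Subgroup.closure S = ⊤) (π : Γ →* Γ') (hπ : Function.Surjective π)
    (s₁ : Γ) (hs₁ : s₁ ∈ S) (hio : ¬ IsOfFinOrder s₁) (n : ℕ) :
    ((n : ℕ∞) < relGirth π S →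
      ∀ ω : ℕ → Γ, IsSAWFrom S n ω → IsSAWFrom (π '' S) n (π ∘ ω)) ∧
    ((n : ℕ∞) + 1 < relGirth π S →
      sawCount (π '' S) n = sawCount S n ∧
      bridgeCount (π '' S) (π s₁) n = bridgeCount S s₁ n) :=
  quotient_saw_counts_eq_general S π s₁ hs₁ n
end
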